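/- arXiv:2106.10100 — 10 statements merged into one kernel-verified Lean document; each statement's English description precedes it below -/
import Mathlib

section
/- Let t_1, …, t_n be L-terms over a variable type β and let Γ be the set of equations {y_i ≈ t_i : i ∈ Fin n} over the disjoint union β ⊕ Fin n, where y_i denotes the i-th variable from Fin n and each t_i is viewed as a term over β ⊕ Fin n. Then: (a) for every equation ε over Fin n, ⊨_V ε(t_1, …, t_n) if and only if Γ ⊨_V ε (as equations over β ⊕ Fin n); and (b) t_1, …, t_n are V-independent if and only if for every equation ε over Fin n, Γ ⊨_V ε implies ⊨_V ε. -/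
open FirstOrder FirstOrder.Language

/-- An `L`-equation over the variable type `α`: a pair of `L`-terms. -/
abbrev LEqn (L : FirstOrder.Language) (α : Type) : Type _ := L.Term α × L.Term α

/-- `M` belongs to the equational class `V` determined by the set `E` of equations
(over arbitrary variable types): `M` is nonempty and every equation of `E` holds in `M`
under every valuation. -/
def InVariety (L : FirstOrder.Language) (E : Set (Σ α : Type, LEqn L α))
    (M : Type) [L.Structure M] : Prop :=
  Nonempty M ∧ ∀ q ∈ E, ∀ v : q.1 → M, q.2.1.realize v = q.2.2.realize v

/-- Equational consequence `S ⊨_V e` over the equational class determined by `E`. -/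
def VModels (L : FirstOrder.Language) (E : Set (Σ α : Type, LEqn L α))
    {α : Type} (S : Set (LEqn L α)) (e : LEqn L α) : Prop :=
  ∀ (M : Type) [L.Structure M], InVariety L E M →
    ∀ v : α → M, (∀ q ∈ S, q.1.realize v = q.2.realize v) →
      e.1.realize v = e.2.realize v

/-- `⊨_V e`, i.e., `∅ ⊨_V e`. -/
def VValid (L : FirstOrder.Language) (E : Set (Σ α : Type, LEqn L α))
    {α : Type} (e : LEqn L α) : Prop :=
  VModels L E (∅ : Set (LEqn L α)) e

/-- `t 0, …, t (n-1)` are `V`-dependent: some equation `e` over `Fin n` satisfies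
`⊨_V e(t 0, …, t (n-1))` but not `⊨_V e`. -/
def VDependent (L : FirstOrder.Language) (E : Set (Σ α : Type, LEqn L α))
    {β : Type} {n : ℕ} (t : Fin n → L.Term β) : Prop :=
  ∃ e : LEqn L (Fin n), VValid L E (e.1.subst t, e.2.subst t) ∧ ¬ VValid L E e

/-- The set `Γ = {y_i ≈ t_i : i ∈ Fin n}` of equations over `β ⊕ Fin n`. -/
def GammaSet (L : FirstOrder.Language) {β : Type} {n : ℕ} (t : Fin n → L.Term β) :
    Set (LEqn L (β ⊕ Fin n)) :=
  { q | ∃ i : Fin n, q = (Term.var (Sum.inr i), (t i).relabel Sum.inl) }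

/-
A valuation satisfies `Γ` exactly when its values on the new variables `y_i` are the values
of the `t_i` under its restriction to `β`. So valuations satisfying `Γ` correspond to arbitrary
valuations `w` of `β`, via `Sum.elim w (fun i => (t i).realize w)`, and under this
correspondence `ε` (read over `β ⊕ Fin n`) and `ε(t_1, …, t_n)` have the same realizations.
-/

namespace GammaSet

variable {L : FirstOrder.Language} {β : Type} {n : ℕ} (t : Fin n → L.Term β)
  {M : Type} [L.Structure M]

theorem realize_inr_eq {v : β ⊕ Fin n → M}
    (hv : ∀ q ∈ GammaSet L t, q.1.realize v = q.2.realize v) :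
    v ∘ Sum.inr = fun i => (t i).realize (v ∘ Sum.inl) := by
  funext i
  simpa [Term.realize_relabel] using hv _ ⟨i, rfl⟩

theorem realize_sumElim (w : β → M) :
    ∀ q ∈ GammaSet L t, q.1.realize (Sum.elim w fun i => (t i).realize w) =
      q.2.realize (Sum.elim w fun i => (t i).realize w) := by
  rintro q ⟨i, rfl⟩
  simp [Term.realize_relabel]

end GammaSet

theorem vValid_subst_iff_vModels_gammaSet {L : FirstOrder.Language}
    {E : Set (Σ α : Type, LEqn L α)} {β : Type} {n : ℕ} (t : Fin n → L.Term β)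
    (e : LEqn L (Fin n)) :
    VValid L E (e.1.subst t, e.2.subst t) ↔
      VModels L E (GammaSet L t) (e.1.relabel Sum.inr, e.2.relabel Sum.inr) := by
  constructor
  · intro h M _ hM v hv
    have hsubst := h M hM (v ∘ Sum.inl) (by simp)
    simp only [Term.realize_subst] at hsubst
    simpa only [Term.realize_relabel, GammaSet.realize_inr_eq t hv] using hsubst
  · intro h M _ hM w _
    simpa [Term.realize_relabel, Term.realize_subst, Function.comp_def] using
      h M hM _ (GammaSet.realize_sumElim t w)

theorem stmt0_general (L : FirstOrder.Language)
    (E : Set (Σ α : Type, LEqn L α)) {β : Type} {n : ℕ} (t : Fin n → L.Term β) :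
    (∀ e : LEqn L (Fin n),
        VValid L E (e.1.subst t, e.2.subst t) ↔
          VModels L E (GammaSet L t) (e.1.relabel Sum.inr, e.2.relabel Sum.inr)) ∧
    (¬ VDependent L E t ↔
      ∀ e : LEqn L (Fin n),
        VModels L E (GammaSet L t) (e.1.relabel Sum.inr, e.2.relabel Sum.inr) →
          VValid L E e) := by
  refine ⟨vValid_subst_iff_vModels_gammaSet t, ?_⟩
  simp only [VDependent, not_exists, not_and_not_right, ← vValid_subst_iff_vModels_gammaSet]

theorem stmt0 (L : FirstOrder.Language) (hL : ∀ k, IsEmpty (L.Relations k))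
    (E : Set (Σ α : Type, LEqn L α)) {β : Type} {n : ℕ} (t : Fin n → L.Term β) :
    (∀ e : LEqn L (Fin n),
        VValid L E (e.1.subst t, e.2.subst t) ↔
          VModels L E (GammaSet L t) (e.1.relabel Sum.inr, e.2.relabel Sum.inr)) ∧
    (¬ VDependent L E t ↔
      ∀ e : LEqn L (Fin n),
        VModels L E (GammaSet L t) (e.1.relabel Sum.inr, e.2.relabel Sum.inr) →
          VValid L E e) :=
  stmt0_general L E t
end

section
/- Let Σ be a set of equations over a variable type β, let t_1, …, t_n be L-terms over β, and let Γ be the set of equations Σ ∪ {y_i ≈ t_i : i ∈ Fin n} over the disjoint union β ⊕ Fin n. Then: (a) for every equation ε over Fin n, Σ ⊨_V ε(t_1, …, t_n) if and only if Γ ⊨_V ε (as equations over β ⊕ Fin n); and (b) t_1, …, t_n are V-independent over Σ if and only if for every equation ε over Fin n, Γ ⊨_V ε implies ⊨_V ε. -/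
/-! A valuation of `β ⊕ Fin n` satisfies `Γ` exactly when it is `w ⊕ (t₁(w), …, tₙ(w))` for a
valuation `w` satisfying `Σ`; along this correspondence `ε` holds of the new variables iff
`ε(t₁, …, tₙ)` holds at `w`. Part (b) is part (a) substituted into the definition. -/

open FirstOrder FirstOrder.Language

/-- `t 0, …, t (n-1)` are `V`-dependent over `S`: some equation `e` over `Fin n` satisfies
`S ⊨_V e(t 0, …, t (n-1))` but not `⊨_V e`. -/
def VDependentOver (L : FirstOrder.Language) (E : Set (Σ α : Type, LEqn L α))
    {β : Type} {n : ℕ} (S : Set (LEqn L β)) (t : Fin n → L.Term β) : Prop :=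
  ∃ e : LEqn L (Fin n), VModels L E S (e.1.subst t, e.2.subst t) ∧ ¬ VValid L E e

/-- The set `Γ = Σ ∪ {y_i ≈ t_i : i ∈ Fin n}` of equations over `β ⊕ Fin n`. -/
def GammaSetS (L : FirstOrder.Language) {β : Type} {n : ℕ}
    (S : Set (LEqn L β)) (t : Fin n → L.Term β) : Set (LEqn L (β ⊕ Fin n)) :=
  (fun q : LEqn L β => ((q.1.relabel Sum.inl, q.2.relabel Sum.inl) : LEqn L (β ⊕ Fin n))) '' S ∪
    { q | ∃ i : Fin n, q = (Term.var (Sum.inr i), (t i).relabel Sum.inl) }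

section GammaSetS

variable {L : Language} {β : Type} {n : ℕ} {S : Set (LEqn L β)} {t : Fin n → L.Term β}
  {M : Type} [L.Structure M]

theorem realize_gammaSetS_iff (v : β ⊕ Fin n → M) :
    (∀ q ∈ GammaSetS L S t, q.1.realize v = q.2.realize v) ↔
      (∀ q ∈ S, q.1.realize (v ∘ Sum.inl) = q.2.realize (v ∘ Sum.inl)) ∧
        v ∘ Sum.inr = fun i => (t i).realize (v ∘ Sum.inl) := by
  simp only [GammaSetS, Set.mem_union, Set.mem_image, Set.mem_ofPred_eq, funext_iff,
    Function.comp_apply]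
  constructor
  · intro hv
    refine ⟨fun q hq => ?_, fun i => ?_⟩
    · simpa [Term.realize_relabel] using hv _ (Or.inl ⟨q, hq, rfl⟩)
    · simpa [Term.realize_relabel] using hv _ (Or.inr ⟨i, rfl⟩)
  · rintro ⟨hS, ht⟩ q (⟨p, hp, rfl⟩ | ⟨i, rfl⟩)
    · simpa [Term.realize_relabel] using hS p hp
    · simpa [Term.realize_relabel] using ht i

theorem vModels_subst_iff_vModels_gammaSetS (E : Set (Σ α : Type, LEqn L α))
    (e : LEqn L (Fin n)) :
    VModels L E S (e.1.subst t, e.2.subst t) ↔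
      VModels L E (GammaSetS L S t) (e.1.relabel Sum.inr, e.2.relabel Sum.inr) := by
  simp only [VModels, Term.realize_subst, Term.realize_relabel]
  constructor
  · intro h M _ hM v hv
    obtain ⟨hS, ht⟩ := (realize_gammaSetS_iff v).mp hv
    rw [ht]
    exact h M hM _ hS
  · intro h M _ hM w hw
    have hv := (realize_gammaSetS_iff (t := t) (Sum.elim w fun i => (t i).realize w)).mpr
      ⟨hw, rfl⟩
    exact h M hM _ hv

end GammaSetS

theorem not_vDependentOver_iff {L : Language} (E : Set (Σ α : Type, LEqn L α)) {β : Type}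
    {n : ℕ} (S : Set (LEqn L β)) (t : Fin n → L.Term β) :
    ¬ VDependentOver L E S t ↔
      ∀ e : LEqn L (Fin n), VModels L E S (e.1.subst t, e.2.subst t) → VValid L E e := by
  simp [VDependentOver]

theorem stmt1_general (L : FirstOrder.Language)
    (E : Set (Σ α : Type, LEqn L α)) {β : Type} {n : ℕ}
    (S : Set (LEqn L β)) (t : Fin n → L.Term β) :
    (∀ e : LEqn L (Fin n),
        VModels L E S (e.1.subst t, e.2.subst t) ↔
          VModels L E (GammaSetS L S t) (e.1.relabel Sum.inr, e.2.relabel Sum.inr)) ∧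
    (¬ VDependentOver L E S t ↔
      ∀ e : LEqn L (Fin n),
        VModels L E (GammaSetS L S t) (e.1.relabel Sum.inr, e.2.relabel Sum.inr) →
          VValid L E e) := by
  refine ⟨vModels_subst_iff_vModels_gammaSetS E, ?_⟩
  simp only [not_vDependentOver_iff, vModels_subst_iff_vModels_gammaSetS]

theorem stmt1 (L : FirstOrder.Language) (hL : ∀ k, IsEmpty (L.Relations k))
    (E : Set (Σ α : Type, LEqn L α)) {β : Type} {n : ℕ}
    (S : Set (LEqn L β)) (t : Fin n → L.Term β) :
    (∀ e : LEqn L (Fin n),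
        VModels L E S (e.1.subst t, e.2.subst t) ↔
          VModels L E (GammaSetS L S t) (e.1.relabel Sum.inr, e.2.relabel Sum.inr)) ∧
    (¬ VDependentOver L E S t ↔
      ∀ e : LEqn L (Fin n),
        VModels L E (GammaSetS L S t) (e.1.relabel Sum.inr, e.2.relabel Sum.inr) →
          VValid L E e) :=
  stmt1_general L E S t
end

section
/- Let Δ be a V-refuting set of equations over Fin n. Then L-terms t_1, …, t_n over a variable type β are V-dependent if and only if ⊨_V δ(t_1, …, t_n) for some δ ∈ Δ. -/
open FirstOrder FirstOrder.Language

/-- `Γ ⊢~_V Δ`: for every substitution `σ` (into terms over a countably infinite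
variable type), if `⊨_V σ(e)` for all `e ∈ Γ` then `⊨_V σ(d)` for some `d ∈ Δ`. -/
def VAdm (L : FirstOrder.Language) (E : Set (Σ α : Type, LEqn L α))
    {α : Type} (Γ Δ : Set (LEqn L α)) : Prop :=
  ∀ σ : α → L.Term ℕ,
    (∀ q ∈ Γ, VValid L E (q.1.subst σ, q.2.subst σ)) →
      ∃ d ∈ Δ, VValid L E (d.1.subst σ, d.2.subst σ)

/-- `Δ` is `V`-refuting for the variables of `Fin n`. -/
def VRefuting (L : FirstOrder.Language) (E : Set (Σ α : Type, LEqn L α))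
    {n : ℕ} (Δ : Set (LEqn L (Fin n))) : Prop :=
  ∀ e : LEqn L (Fin n), ¬ VValid L E e ↔ VAdm L E {e} Δ

/-!
If `t` is dependent, witnessed by `e`, then `e` is not valid, so `{e} ⊢~ Δ`. Renaming the finitely
many variables of `t` injectively into `ℕ` does not affect validity of equations `ε(t)`, so the
admissibility applied to the renamed `t` yields `d ∈ Δ` with `⊨ d(t)`. Conversely, no member of
a refuting set is valid (otherwise even the trivial equation `x = x` would be refuted), so any
`d ∈ Δ` with `⊨ d(t)` witnesses dependence.
-/

namespace FirstOrder.Language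

variable {L : Language} {E : Set (Σ α : Type, LEqn L α)}

theorem VValid.subst {α β : Type} {e : LEqn L α} (he : VValid L E e) (σ : α → L.Term β) :
    VValid L E (e.1.subst σ, e.2.subst σ) := by
  intro M _ hM v _
  simp only [Term.realize_subst]
  exact he M hM _ (by simp)

theorem vvalid_iff_of_realize_comp {β γ : Type} {g : β → γ} (hg : g.Injective)
    {e : LEqn L β} {e' : LEqn L γ}
    (h₁ : ∀ (M : Type) [L.Structure M] (v : γ → M), e.1.realize (v ∘ g) = e'.1.realize v)
    (h₂ : ∀ (M : Type) [L.Structure M] (v : γ → M), e.2.realize (v ∘ g) = e'.2.realize v) :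
    VValid L E e ↔ VValid L E e' := by
  constructor
  · intro he M _ hM v _
    rw [← h₁, ← h₂]
    exact he M hM _ (by simp)
  · intro he' M _ hM w _
    obtain ⟨m⟩ := hM.1
    have hw : Function.extend g w (fun _ => m) ∘ g = w := funext (hg.extend_apply w _)
    rw [← hw, h₁, h₂]
    exact he' M hM _ (by simp)

theorem vvalid_subst_iff_of_realize_comp {α β γ : Type} {g : β → γ} (hg : g.Injective)
    {t : α → L.Term β} {t' : α → L.Term γ}
    (h : ∀ (M : Type) [L.Structure M] (v : γ → M) (a : α),
      (t a).realize (v ∘ g) = (t' a).realize v)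
    (e : LEqn L α) :
    VValid L E (e.1.subst t, e.2.subst t) ↔ VValid L E (e.1.subst t', e.2.subst t') := by
  refine vvalid_iff_of_realize_comp hg ?_ ?_ <;>
  · intro M _ v
    simp only [Term.realize_subst]
    congr 1
    exact funext (h M v)

theorem exists_subst_nat_vvalid_iff {α β : Type} [Finite α] (t : α → L.Term β) :
    ∃ σ : α → L.Term ℕ, ∀ e : LEqn L α,
      VValid L E (e.1.subst σ, e.2.subst σ) ↔ VValid L E (e.1.subst t, e.2.subst t) := by
  classical
  have := Fintype.ofFinite α
  set S : Set β := ↑(Finset.univ.biUnion fun a => (t a).varFinset)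
  have hS : ∀ a, ↑(t a).varFinset ⊆ S := fun a x hx => by
    simpa [S] using ⟨a, hx⟩
  let tS : α → L.Term S := fun a => (t a).restrictVar (Set.inclusion (hS a))
  obtain ⟨g, hg⟩ := Countable.exists_injective_nat S
  refine ⟨fun a => (tS a).relabel g, fun e => ?_⟩
  rw [← vvalid_subst_iff_of_realize_comp hg (fun M _ v a => Term.realize_relabel.symm),
    vvalid_subst_iff_of_realize_comp Subtype.val_injective
      (fun M _ v a => Term.realize_restrictVar' (hS a))]

theorem VRefuting.not_vvalid_of_mem {n : ℕ} {Δ : Set (LEqn L (Fin n))} (hΔ : VRefuting L E Δ)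
    {d : LEqn L (Fin n)} (hd : d ∈ Δ) : ¬ VValid L E d := by
  intro hvalid
  have hadm : VAdm L E {(d.1, d.1)} Δ := fun σ _ => ⟨d, hd, hvalid.subst σ⟩
  exact (hΔ (d.1, d.1)).mpr hadm fun _ _ _ _ _ => rfl

end FirstOrder.Language

theorem stmt2_general (L : FirstOrder.Language)
    (E : Set (Σ α : Type, LEqn L α)) {n : ℕ} (Δ : Set (LEqn L (Fin n)))
    (hΔ : VRefuting L E Δ) {β : Type} (t : Fin n → L.Term β) :
    VDependent L E t ↔ ∃ d ∈ Δ, VValid L E (d.1.subst t, d.2.subst t) := by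
  constructor
  · rintro ⟨e, het, hne⟩
    obtain ⟨σ, hσ⟩ := exists_subst_nat_vvalid_iff (E := E) t
    obtain ⟨d, hd, hdσ⟩ := (hΔ e).mp hne σ (by rintro q rfl; exact (hσ q).mpr het)
    exact ⟨d, hd, (hσ d).mp hdσ⟩
  · rintro ⟨d, hd, hdt⟩
    exact ⟨d, hdt, hΔ.not_vvalid_of_mem hd⟩

theorem stmt2 (L : FirstOrder.Language) (hL : ∀ k, IsEmpty (L.Relations k))
    (E : Set (Σ α : Type, LEqn L α)) {n : ℕ} (Δ : Set (LEqn L (Fin n)))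
    (hΔ : VRefuting L E Δ) {β : Type} (t : Fin n → L.Term β) :
    VDependent L E t ↔ ∃ d ∈ Δ, VValid L E (d.1.subst t, d.2.subst t) :=
  stmt2_general L E Δ hΔ t
end

section
/- Let Σ be a set of equations over a variable type β, let t_1, …, t_n be L-terms over β, and let Γ := Σ ∪ {y_i ≈ t_i : i ∈ Fin n}, a set of equations over β ⊕ Fin n. Suppose Π is a set of equations over Fin n such that for every equation ε over Fin n, Γ ⊨_V ε if and only if Π ⊨_V ε. Then t_1, …, t_n are V-independent over Σ if and only if ⊨_V π for every π ∈ Π. -/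
open FirstOrder FirstOrder.Language

/-!
The valuations satisfying `Γ` are exactly the valuations of `β` satisfying `Σ`, extended by
`y_i ↦ t_i`; hence `Γ ⊨_V ε` iff `Σ ⊨_V ε(t_1, …, t_n)`, so the hypothesis on `Π` reads
`Σ ⊨_V ε(t_1, …, t_n) ↔ Π ⊨_V ε`. Independence then means that every consequence of `Π` is
valid, which holds iff every member of `Π` is valid.
-/

variable {L : FirstOrder.Language} {E : Set (Σ α : Type, LEqn L α)}

theorem VModels.of_mem {α : Type} {S : Set (LEqn L α)} {e : LEqn L α} (he : e ∈ S) :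
    VModels L E S e :=
  fun _ _ _ _ hv => hv e he

theorem VModels.vValid {α : Type} {P : Set (LEqn L α)} {e : LEqn L α}
    (he : VModels L E P e) (hP : ∀ p ∈ P, VValid L E p) : VValid L E e :=
  fun M _ hM v _ => he M hM v fun p hp => hP p hp M hM v fun _ h => h.elim

section Gamma

variable {β : Type} {n : ℕ} {S : Set (LEqn L β)} {t : Fin n → L.Term β}

theorem satisfies_gammaSetS_iff {M : Type} [L.Structure M] (v : β ⊕ Fin n → M) :
    (∀ q ∈ GammaSetS L S t, q.1.realize v = q.2.realize v) ↔
      (∀ q ∈ S, q.1.realize (v ∘ Sum.inl) = q.2.realize (v ∘ Sum.inl)) ∧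
        ∀ i, v (Sum.inr i) = (t i).realize (v ∘ Sum.inl) := by
  simp only [GammaSetS, Set.mem_union, Set.mem_image, Set.mem_ofPred_eq]
  constructor
  · intro hv
    refine ⟨fun q hq => ?_, fun i => ?_⟩
    · simpa only [Term.realize_relabel] using hv _ (Or.inl ⟨q, hq, rfl⟩)
    · simpa only [Term.realize_relabel, Term.realize_var] using hv _ (Or.inr ⟨i, rfl⟩)
  · rintro ⟨hS, ht⟩ q (⟨q, hq, rfl⟩ | ⟨i, rfl⟩)
    · simpa only [Term.realize_relabel] using hS q hq
    · simpa only [Term.realize_relabel, Term.realize_var] using ht i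

theorem vModels_gammaSetS_iff (e : LEqn L (Fin n)) :
    VModels L E (GammaSetS L S t) (e.1.relabel Sum.inr, e.2.relabel Sum.inr) ↔
      VModels L E S (e.1.subst t, e.2.subst t) := by
  simp only [VModels, Term.realize_relabel, Term.realize_subst]
  constructor
  · intro h M _ hM v hv
    exact h M hM (Sum.elim v fun i => (t i).realize v)
      ((satisfies_gammaSetS_iff _).2 ⟨hv, fun _ => rfl⟩)
  · intro h M _ hM v hv
    obtain ⟨hS, ht⟩ := (satisfies_gammaSetS_iff v).1 hv
    have hvt : v ∘ Sum.inr = fun i => (t i).realize (v ∘ Sum.inl) := funext ht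
    rw [hvt]
    exact h M hM _ hS

end Gamma

theorem stmt3_general (L : FirstOrder.Language)
    (E : Set (Σ α : Type, LEqn L α)) {β : Type} {n : ℕ}
    (S : Set (LEqn L β)) (t : Fin n → L.Term β)
    (P : Set (LEqn L (Fin n)))
    (hP : ∀ e : LEqn L (Fin n),
      VModels L E (GammaSetS L S t) (e.1.relabel Sum.inr, e.2.relabel Sum.inr) ↔
        VModels L E P e) :
    ¬ VDependentOver L E S t ↔ ∀ p ∈ P, VValid L E p := by
  have hPsubst (e : LEqn L (Fin n)) : VModels L E S (e.1.subst t, e.2.subst t) ↔ VModels L E P e :=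
    (vModels_gammaSetS_iff e).symm.trans (hP e)
  simp only [VDependentOver, not_exists, not_and, not_not]
  constructor
  · intro hind p hp
    exact hind p ((hPsubst p).2 (VModels.of_mem hp))
  · intro hval e he
    exact ((hPsubst e).1 he).vValid hval

theorem stmt3 (L : FirstOrder.Language) (hL : ∀ k, IsEmpty (L.Relations k))
    (E : Set (Σ α : Type, LEqn L α)) {β : Type} {n : ℕ}
    (S : Set (LEqn L β)) (t : Fin n → L.Term β)
    (P : Set (LEqn L (Fin n)))
    (hP : ∀ e : LEqn L (Fin n),
      VModels L E (GammaSetS L S t) (e.1.relabel Sum.inr, e.2.relabel Sum.inr) ↔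
        VModels L E P e) :
    ¬ VDependentOver L E S t ↔ ∀ p ∈ P, VValid L E p :=
  stmt3_general L E S t P hP
end

section
/- For every n ≥ 2, the set Δ_n is Lat-refuting for the variables of Fin n: for every lattice equation ε over Fin n, ε fails to be Lat-valid if and only if {ε} ⊢~_Lat Δ_n. -/
/-- Lattice terms over variable type `α`: first-order terms in the language with exactly
two binary function symbols (meet and join). -/
inductive LatTerm (α : Type) : Type
  | var : α → LatTerm α
  | meet : LatTerm α → LatTerm α → LatTerm α
  | join : LatTerm α → LatTerm α → LatTerm α

namespace LatTerm

/-- Realization of a lattice term in a lattice `M` under a valuation `v`. -/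
def realize {α M : Type} [Lattice M] (v : α → M) : LatTerm α → M
  | var a => v a
  | meet s t => realize v s ⊓ realize v t
  | join s t => realize v s ⊔ realize v t

/-- Simultaneous substitution of lattice terms for variables. -/
def subst {α β : Type} (σ : α → LatTerm β) : LatTerm α → LatTerm β
  | var a => σ a
  | meet s t => meet (subst σ s) (subst σ t)
  | join s t => join (subst σ s) (subst σ t)

end LatTerm

/-- A lattice equation: a pair of lattice terms. -/
abbrev LatEq (α : Type) : Type := LatTerm α × LatTerm α

/-- The inequation `s ≤ t`, as the equation `s ⊓ t ≈ s`. -/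
def leEq {α : Type} (s t : LatTerm α) : LatEq α := (s.meet t, s)

/-- Lat-validity: the two terms have equal realizations in every lattice under
every valuation. -/
def LatValid {α : Type} (e : LatEq α) : Prop :=
  ∀ (M : Type) [Lattice M] (v : α → M), e.1.realize v = e.2.realize v

/-- The join, with a fixed bracketing, of `f 0, …, f m`. -/
def finJoin {α : Type} : {m : ℕ} → (Fin (m + 1) → LatTerm α) → LatTerm α
  | 0, f => f 0
  | _ + 1, f => LatTerm.join (finJoin fun k => f k.castSucc) (f (Fin.last _))

/-- The meet, with a fixed bracketing, of `f 0, …, f m`. -/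
def finMeet {α : Type} : {m : ℕ} → (Fin (m + 1) → LatTerm α) → LatTerm α
  | 0, f => f 0
  | _ + 1, f => LatTerm.meet (finMeet fun k => f k.castSucc) (f (Fin.last _))

/-- `Γ ⊢~_Lat Δ`. -/
def LatAdm {n : ℕ} (Γ Δ : Set (LatEq (Fin n))) : Prop :=
  ∀ σ : Fin n → LatTerm ℕ,
    (∀ e ∈ Γ, LatValid (e.1.subst σ, e.2.subst σ)) →
      ∃ d ∈ Δ, LatValid (d.1.subst σ, d.2.subst σ)

/-- `Δ` is Lat-refuting for the variables of `Fin n`. -/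
def LatRefuting {n : ℕ} (Δ : Set (LatEq (Fin n))) : Prop :=
  ∀ e : LatEq (Fin n), ¬ LatValid e ↔ LatAdm {e} Δ

/-- The set `Δ_n` (for `n = m + 2`) of the `2n` equations
`y_i ≤ ⊔_{j ≠ i} y_j` and `⊓_{j ≠ i} y_j ≤ y_i` for `i ∈ Fin n`. -/
def DeltaLat (m : ℕ) : Set (LatEq (Fin (m + 2))) :=
  { e | ∃ i : Fin (m + 2),
      e = leEq (.var i) (finJoin fun k : Fin (m + 1) => .var (i.succAbove k)) ∨
      e = leEq (finMeet fun k : Fin (m + 1) => .var (i.succAbove k)) (.var i) }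

/-! A substitution of distinct variables keeps a valid equation valid, and it cannot make any
member of `Δ_n` valid: evaluate `y_i` to `⊤` and the other variables to `⊥`, or dually.
Conversely, if no member of `Δ_n` becomes valid under `σ`, the elements `σ y_i` of the free
lattice are independent: none lies below the join of the others or above their meet. The free
lattice satisfies Whitman's condition `(W)`, which is read off from the cut-free sequent calculus
for lattice inequalities, and by Jónsson's lemma an independent family in a lattice with `(W)`
generates a free sublattice. Hence an equation that is valid after `σ` was valid before. -/

def WhitmanCondition (L : Type*) [Lattice L] : Prop :=
  ∀ a b c d : L, a ⊓ b ≤ c ⊔ d → a ≤ c ⊔ d ∨ b ≤ c ⊔ d ∨ a ⊓ b ≤ c ∨ a ⊓ b ≤ d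

/-- For a finite family this says `a i ≰ ⨆ j ≠ i, a j` and `⨅ j ≠ i, a j ≰ a i` for all `i`. -/
def LatticeIndependent {ι L : Type*} [Lattice L] (a : ι → L) : Prop :=
  ∀ i, (∃ J, (∀ j, j ≠ i → a j ≤ J) ∧ ¬ a i ≤ J) ∧ ∃ M, (∀ j, j ≠ i → M ≤ a j) ∧ ¬ M ≤ a i

namespace LatTerm

variable {α β ι : Type}

theorem realize_subst {M : Type} [Lattice M] (v : β → M) (σ : α → LatTerm β) (t : LatTerm α) :
    (t.subst σ).realize v = t.realize fun a => (σ a).realize v := by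
  induction t with
  | var => rfl
  | meet s t ihs iht => exact congrArg₂ (· ⊓ ·) ihs iht
  | join s t ihs iht => exact congrArg₂ (· ⊔ ·) ihs iht

theorem _root_.LatValid.subst {p q : LatTerm α} (h : LatValid (p, q)) (σ : α → LatTerm β) :
    LatValid (p.subst σ, q.subst σ) := fun M _ v => by
  simp only [realize_subst]
  exact h M _

theorem _root_.LatValid.of_subst_var [Nonempty α] {ρ : α → β} (hρ : Function.Injective ρ)
    {p q : LatTerm α} (h : LatValid (p.subst fun a => var (ρ a), q.subst fun a => var (ρ a))) :
    LatValid (p, q) := fun M _ v => by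
  simpa only [realize_subst, realize, Function.comp_apply, Function.leftInverse_invFun hρ _]
    using h M (v ∘ Function.invFun ρ)

theorem _root_.LatValid.realize_le {s t : LatTerm α} (h : LatValid (leEq s t)) {M : Type}
    [Lattice M] (v : α → M) : s.realize v ≤ t.realize v :=
  inf_eq_left.1 (h M v)

theorem realize_finJoin_le_iff {M : Type} [Lattice M] (v : α → M) {c : M} :
    ∀ {m : ℕ} (f : Fin (m + 1) → LatTerm α),
      (finJoin f).realize v ≤ c ↔ ∀ k, (f k).realize v ≤ c
  | 0, _ => by simp [finJoin, Fin.forall_fin_one]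
  | _ + 1, f => by
    simp only [finJoin, realize, sup_le_iff, realize_finJoin_le_iff v]
    exact (Fin.forall_fin_succ' (P := fun k => (f k).realize v ≤ c)).symm

theorem le_realize_finMeet_iff {M : Type} [Lattice M] (v : α → M) {c : M} :
    ∀ {m : ℕ} (f : Fin (m + 1) → LatTerm α),
      c ≤ (finMeet f).realize v ↔ ∀ k, c ≤ (f k).realize v
  | 0, _ => by simp [finMeet, Fin.forall_fin_one]
  | _ + 1, f => by
    simp only [finMeet, realize, le_inf_iff, le_realize_finMeet_iff v]
    exact (Fin.forall_fin_succ' (P := fun k => c ≤ (f k).realize v)).symm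

/-- Whitman's sequent calculus for lattice inequalities; it has no cut rule. -/
inductive WhitmanLe : LatTerm α → LatTerm α → Prop
  | var (a : α) : WhitmanLe (var a) (var a)
  | join_left {s₁ s₂ t : LatTerm α} : WhitmanLe s₁ t → WhitmanLe s₂ t → WhitmanLe (join s₁ s₂) t
  | meet_right {s t₁ t₂ : LatTerm α} : WhitmanLe s t₁ → WhitmanLe s t₂ → WhitmanLe s (meet t₁ t₂)
  | meet_left_l {s₁ s₂ t : LatTerm α} : WhitmanLe s₁ t → WhitmanLe (meet s₁ s₂) t
  | meet_left_r {s₁ s₂ t : LatTerm α} : WhitmanLe s₂ t → WhitmanLe (meet s₁ s₂) t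
  | join_right_l {s t₁ t₂ : LatTerm α} : WhitmanLe s t₁ → WhitmanLe s (join t₁ t₂)
  | join_right_r {s t₁ t₂ : LatTerm α} : WhitmanLe s t₂ → WhitmanLe s (join t₁ t₂)

local infix:50 " ⊑ " => WhitmanLe

namespace WhitmanLe

theorem refl : ∀ t : LatTerm α, t ⊑ t
  | .var a => .var a
  | meet s t => .meet_right (.meet_left_l (refl s)) (.meet_left_r (refl t))
  | join s t => .join_left (.join_right_l (refl s)) (.join_right_r (refl t))

theorem trans_of_meet_left {r s₁ s₂ : LatTerm α} (h₁ : ∀ {t}, s₁ ⊑ t → r ⊑ t)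
    (h₂ : ∀ {t}, s₂ ⊑ t → r ⊑ t) {t : LatTerm α} (hst : meet s₁ s₂ ⊑ t) : r ⊑ t := by
  induction t with
  | var => cases hst with
    | meet_left_l h => exact h₁ h
    | meet_left_r h => exact h₂ h
  | meet t₁ t₂ ih₁ ih₂ => cases hst with
    | meet_left_l h => exact h₁ h
    | meet_left_r h => exact h₂ h
    | meet_right hst₁ hst₂ => exact .meet_right (ih₁ hst₁) (ih₂ hst₂)
  | join t₁ t₂ ih₁ ih₂ => cases hst with
    | meet_left_l h => exact h₁ h
    | meet_left_r h => exact h₂ h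
    | join_right_l hst => exact .join_right_l (ih₁ hst)
    | join_right_r hst => exact .join_right_r (ih₂ hst)

theorem trans_of_join_left {r s₁ s₂ : LatTerm α} (h : ∀ {t}, s₁ ⊑ t → s₂ ⊑ t → r ⊑ t)
    {t : LatTerm α} (hst : join s₁ s₂ ⊑ t) : r ⊑ t := by
  induction t with
  | var => cases hst with
    | join_left h₁ h₂ => exact h h₁ h₂
  | meet t₁ t₂ ih₁ ih₂ => cases hst with
    | join_left h₁ h₂ => exact h h₁ h₂
    | meet_right hst₁ hst₂ => exact .meet_right (ih₁ hst₁) (ih₂ hst₂)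
  | join t₁ t₂ ih₁ ih₂ => cases hst with
    | join_left h₁ h₂ => exact h h₁ h₂
    | join_right_l hst => exact .join_right_l (ih₁ hst)
    | join_right_r hst => exact .join_right_r (ih₂ hst)

/-- Cut elimination. When the derivation of `r ⊑ s` ends with a right rule, the cut moves into
the derivation of `s ⊑ t`. -/
theorem trans {r s t : LatTerm α} (hrs : r ⊑ s) (hst : s ⊑ t) : r ⊑ t := by
  induction hrs generalizing t with
  | var => exact hst
  | join_left _ _ ih₁ ih₂ => exact .join_left (ih₁ hst) (ih₂ hst)
  | meet_left_l _ ih => exact .meet_left_l (ih hst)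
  | meet_left_r _ ih => exact .meet_left_r (ih hst)
  | meet_right _ _ ih₁ ih₂ => exact trans_of_meet_left ih₁ ih₂ hst
  | join_right_l _ ih => exact trans_of_join_left (fun h _ => ih h) hst
  | join_right_r _ ih => exact trans_of_join_left (fun _ h => ih h) hst

theorem realize_le {M : Type} [Lattice M] (v : α → M) {s t : LatTerm α} (h : s ⊑ t) :
    s.realize v ≤ t.realize v := by
  induction h with
  | var => exact le_rfl
  | join_left _ _ ih₁ ih₂ => exact sup_le ih₁ ih₂
  | meet_right _ _ ih₁ ih₂ => exact le_inf ih₁ ih₂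
  | meet_left_l _ ih => exact inf_le_of_left_le ih
  | meet_left_r _ ih => exact inf_le_of_right_le ih
  | join_right_l _ ih => exact le_sup_of_le_left ih
  | join_right_r _ ih => exact le_sup_of_le_right ih

theorem latValid_leEq {s t : LatTerm α} (h : s ⊑ t) : LatValid (leEq s t) :=
  fun _ _ v => inf_eq_left.2 (h.realize_le v)

theorem latValid {s t : LatTerm α} (h₁ : s ⊑ t) (h₂ : t ⊑ s) : LatValid (s, t) :=
  fun _ _ v => le_antisymm (h₁.realize_le v) (h₂.realize_le v)

end WhitmanLe

def whitmanSetoid (α : Type) : Setoid (LatTerm α) where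
  r s t := s ⊑ t ∧ t ⊑ s
  iseqv := ⟨fun t => ⟨.refl t, .refl t⟩, fun h => ⟨h.2, h.1⟩,
    fun h₁ h₂ => ⟨h₁.1.trans h₂.1, h₂.2.trans h₁.2⟩⟩

abbrev FreeLat (α : Type) : Type := Quotient (whitmanSetoid α)

def FreeLat.mk : LatTerm α → FreeLat α := Quotient.mk _

instance : Lattice (FreeLat α) where
  le := Quotient.lift₂ WhitmanLe fun _ _ _ _ ha hb =>
    propext ⟨fun h => (ha.2.trans h).trans hb.1, fun h => (ha.1.trans h).trans hb.2⟩
  le_refl x := Quotient.inductionOn x WhitmanLe.refl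
  le_trans x y z := Quotient.inductionOn₃ x y z fun _ _ _ => WhitmanLe.trans
  le_antisymm x y := Quotient.inductionOn₂ x y fun _ _ h₁ h₂ => Quotient.sound ⟨h₁, h₂⟩
  sup := Quotient.map₂ join fun _ _ ha _ _ hb =>
    ⟨.join_left (.join_right_l ha.1) (.join_right_r hb.1),
      .join_left (.join_right_l ha.2) (.join_right_r hb.2)⟩
  inf := Quotient.map₂ meet fun _ _ ha _ _ hb =>
    ⟨.meet_right (.meet_left_l ha.1) (.meet_left_r hb.1),
      .meet_right (.meet_left_l ha.2) (.meet_left_r hb.2)⟩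
  le_sup_left x y := Quotient.inductionOn₂ x y fun a _ => .join_right_l (.refl a)
  le_sup_right x y := Quotient.inductionOn₂ x y fun _ b => .join_right_r (.refl b)
  sup_le x y z := Quotient.inductionOn₃ x y z fun _ _ _ => .join_left
  inf_le_left x y := Quotient.inductionOn₂ x y fun a _ => .meet_left_l (.refl a)
  inf_le_right x y := Quotient.inductionOn₂ x y fun _ b => .meet_left_r (.refl b)
  le_inf x y z := Quotient.inductionOn₃ x y z fun _ _ _ => .meet_right

namespace FreeLat

theorem mk_le_mk {s t : LatTerm α} : mk s ≤ mk t ↔ s ⊑ t := Iff.rfl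

theorem realize_mk_var (t : LatTerm α) : t.realize (fun a => mk (.var a)) = mk t := by
  induction t with
  | var => rfl
  | meet s t ihs iht => exact congrArg₂ (· ⊓ ·) ihs iht
  | join s t ihs iht => exact congrArg₂ (· ⊔ ·) ihs iht

theorem realize_mk (σ : α → LatTerm β) (t : LatTerm α) :
    t.realize (fun a => mk (σ a)) = mk (t.subst σ) := by
  rw [← realize_mk_var, realize_subst]
  simp only [realize_mk_var]

/-- A cut-free derivation of `a ⊓ b ⊑ c ⊔ d` ends with one of the four rules that decompose
its sides. -/
theorem whitmanCondition : WhitmanCondition (FreeLat α) := by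
  rintro ⟨a⟩ ⟨b⟩ ⟨c⟩ ⟨d⟩ (h : meet a b ⊑ join c d)
  cases h with
  | meet_left_l h => exact .inl h
  | meet_left_r h => exact .inr (.inl h)
  | join_right_l h => exact .inr (.inr (.inl h))
  | join_right_r h => exact .inr (.inr (.inr h))

end FreeLat

section Independence

variable {L : Type} [Lattice L] {a : ι → L}

theorem le_realize_or_realize_le {i : ι} {J : L} (hJ : ∀ j, j ≠ i → a j ≤ J) (t : LatTerm ι) :
    a i ≤ t.realize a ∨ t.realize a ≤ J := by
  induction t with
  | var j =>
    by_cases hji : j = i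
    · exact .inl (hji ▸ le_rfl)
    · exact .inr (hJ j hji)
  | meet t₁ t₂ ih₁ ih₂ =>
    rcases ih₁ with h₁ | h₁
    · rcases ih₂ with h₂ | h₂
      · exact .inl (le_inf h₁ h₂)
      · exact .inr (inf_le_of_right_le h₂)
    · exact .inr (inf_le_of_left_le h₁)
  | join t₁ t₂ ih₁ ih₂ =>
    rcases ih₁ with h₁ | h₁
    · exact .inl (le_sup_of_le_left h₁)
    · rcases ih₂ with h₂ | h₂
      · exact .inl (le_sup_of_le_right h₂)
      · exact .inr (sup_le h₁ h₂)

theorem realize_le_or_le_realize {i : ι} {M : L} (hM : ∀ j, j ≠ i → M ≤ a j) (t : LatTerm ι) :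
    t.realize a ≤ a i ∨ M ≤ t.realize a := by
  induction t with
  | var j =>
    by_cases hji : j = i
    · exact .inl (hji ▸ le_rfl)
    · exact .inr (hM j hji)
  | join t₁ t₂ ih₁ ih₂ =>
    rcases ih₁ with h₁ | h₁
    · rcases ih₂ with h₂ | h₂
      · exact .inl (sup_le h₁ h₂)
      · exact .inr (le_sup_of_le_right h₂)
    · exact .inr (le_sup_of_le_left h₁)
  | meet t₁ t₂ ih₁ ih₂ =>
    rcases ih₁ with h₁ | h₁
    · exact .inl (inf_le_of_left_le h₁)
    · rcases ih₂ with h₂ | h₂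
      · exact .inl (inf_le_of_right_le h₂)
      · exact .inr (le_inf h₁ h₂)

/-- Jónsson's lemma: an independent family in a lattice satisfying `(W)` generates a free
sublattice. -/
theorem whitmanLe_of_realize_le (hW : WhitmanCondition L) (ha : LatticeIndependent a)
    {s t : LatTerm ι} (h : s.realize a ≤ t.realize a) : s ⊑ t := by
  induction s generalizing t with
  | join s₁ s₂ ih₁ ih₂ => exact .join_left (ih₁ (sup_le_iff.1 h).1) (ih₂ (sup_le_iff.1 h).2)
  | var i =>
    obtain ⟨J, hJ, hiJ⟩ := (ha i).1
    induction t with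
    | var j =>
      by_cases hij : i = j
      · exact hij ▸ .var i
      · exact absurd (h.trans (hJ j (Ne.symm hij))) hiJ
    | meet t₁ t₂ ih₁ ih₂ => exact .meet_right (ih₁ (le_inf_iff.1 h).1) (ih₂ (le_inf_iff.1 h).2)
    | join t₁ t₂ ih₁ ih₂ =>
      rcases le_realize_or_realize_le hJ t₁ with h₁ | h₁
      · exact .join_right_l (ih₁ h₁)
      rcases le_realize_or_realize_le hJ t₂ with h₂ | h₂
      · exact .join_right_r (ih₂ h₂)
      exact absurd (h.trans (sup_le h₁ h₂)) hiJ
  | meet s₁ s₂ ihs₁ ihs₂ =>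
    induction t with
    | var j =>
      obtain ⟨M, hM, hMj⟩ := (ha j).2
      rcases realize_le_or_le_realize hM s₁ with h₁ | h₁
      · exact .meet_left_l (ihs₁ h₁)
      rcases realize_le_or_le_realize hM s₂ with h₂ | h₂
      · exact .meet_left_r (ihs₂ h₂)
      exact absurd ((le_inf h₁ h₂).trans h) hMj
    | meet t₁ t₂ ih₁ ih₂ => exact .meet_right (ih₁ (le_inf_iff.1 h).1) (ih₂ (le_inf_iff.1 h).2)
    | join t₁ t₂ ih₁ ih₂ =>
      rcases hW _ _ _ _ h with h' | h' | h' | h'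
      · exact .meet_left_l (ihs₁ h')
      · exact .meet_left_r (ihs₂ h')
      · exact .join_right_l (ih₁ h')
      · exact .join_right_r (ih₂ h')

end Independence

theorem latValid_of_latValid_subst (σ : ι → LatTerm β)
    (hσ : LatticeIndependent fun i => FreeLat.mk (σ i)) {p q : LatTerm ι}
    (h : LatValid (p.subst σ, q.subst σ)) : LatValid (p, q) := by
  have hpq : p.realize (fun i => FreeLat.mk (σ i)) = q.realize fun i => FreeLat.mk (σ i) := by
    have h' := h _ fun b => FreeLat.mk (.var b)
    simp only [FreeLat.realize_mk_var] at h'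
    rwa [← FreeLat.realize_mk, ← FreeLat.realize_mk] at h'
  exact WhitmanLe.latValid (whitmanLe_of_realize_le FreeLat.whitmanCondition hσ hpq.le)
    (whitmanLe_of_realize_le FreeLat.whitmanCondition hσ hpq.ge)

end LatTerm

open LatTerm

theorem not_latValid_of_mem_deltaLat {m : ℕ} {e : LatEq (Fin (m + 2))} (he : e ∈ DeltaLat m) :
    ¬ LatValid e := by
  obtain ⟨i, rfl | rfl⟩ := he <;> intro h
  · have hi := h.realize_le fun j => j = i
    exact hi.trans ((realize_finJoin_le_iff _ _).2 fun k => Fin.succAbove_ne i k) rfl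
  · have hi := h.realize_le fun j => j ≠ i
    exact ((le_realize_finMeet_iff _ _).2 (fun k _ => Fin.succAbove_ne i k)).trans hi trivial rfl

theorem latticeIndependent_of_forall_not_latValid {m : ℕ} (σ : Fin (m + 2) → LatTerm ℕ)
    (hσ : ∀ d ∈ DeltaLat m, ¬ LatValid (d.1.subst σ, d.2.subst σ)) :
    LatticeIndependent fun i => FreeLat.mk (σ i) := by
  have hvalid {s t : LatTerm (Fin (m + 2))}
      (h : s.realize (fun i => FreeLat.mk (σ i)) ≤ t.realize fun i => FreeLat.mk (σ i)) :
      LatValid ((leEq s t).1.subst σ, (leEq s t).2.subst σ) := by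
    rw [FreeLat.realize_mk, FreeLat.realize_mk, FreeLat.mk_le_mk] at h
    exact h.latValid_leEq
  intro i
  constructor
  · refine ⟨(finJoin fun k => var (i.succAbove k)).realize fun i => FreeLat.mk (σ i),
      fun j hji => ?_, fun h => hσ _ ⟨i, .inl rfl⟩ (hvalid h)⟩
    obtain ⟨k, rfl⟩ := Fin.exists_succAbove_eq hji
    exact (realize_finJoin_le_iff (fun i => FreeLat.mk (σ i)) _).1 le_rfl k
  · refine ⟨(finMeet fun k => var (i.succAbove k)).realize fun i => FreeLat.mk (σ i),
      fun j hji => ?_, fun h => hσ _ ⟨i, .inr rfl⟩ (hvalid h)⟩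
    obtain ⟨k, rfl⟩ := Fin.exists_succAbove_eq hji
    exact (le_realize_finMeet_iff (fun i => FreeLat.mk (σ i)) _).1 le_rfl k

theorem stmt4 (m : ℕ) : LatRefuting (DeltaLat m) := by
  rintro ⟨p, q⟩
  constructor
  · intro hpq σ hσ
    by_contra! hΔ
    exact hpq (latValid_of_latValid_subst σ (latticeIndependent_of_forall_not_latValid σ hΔ)
      (hσ _ rfl))
  · intro hadm hpq
    obtain ⟨d, hd, hvalid⟩ := hadm (fun i => .var i) fun e he => he ▸ hpq.subst _
    exact not_latValid_of_mem_deltaLat hd (hvalid.of_subst_var Fin.val_injective)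
end

section
/- Let n ≥ 2 and let t_1, …, t_n be lattice terms over a variable type β. Then t_1, …, t_n are Lat-dependent if and only if there exists i ∈ Fin n such that ⊨_Lat t_i ≤ ⊔_{j ≠ i} t_j or ⊨_Lat ⊓_{j ≠ i} t_j ≤ t_i, where ⊔_{j ≠ i} t_j and ⊓_{j ≠ i} t_j denote the join, respectively meet, with some fixed bracketing, of the terms t_j with j ≠ i. -/
/-- `t 0, …, t (n-1)` are Lat-dependent: some equation `e` over `Fin n` satisfies
`⊨_Lat e(t 0, …, t (n-1))` but not `⊨_Lat e`. -/
def LatDependent {β : Type} {n : ℕ} (t : Fin n → LatTerm β) : Prop :=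
  ∃ e : LatEq (Fin n), LatValid (e.1.subst t, e.2.subst t) ∧ ¬ LatValid e

/-!
Lat-validity of `s ≤ t` coincides with derivability in Whitman's cut-free calculus, because
terms modulo mutual derivability form the free lattice. So `t` is dependent iff substituting
`t` fails to reflect derivability of some `u ≤ v`. If `t i` lies below the join (or above the
meet) of the other `t j`, the same inequation between variables is such a failure.
Conversely, if no such `i` exists, substitution reflects derivability by induction on `u` and
`v`: when `xᵢ ≰ v`, the term `v(t)` lies below the join of the `t j` with `j ≠ i`, so
`tᵢ ≤ v(t)` is impossible; dually for `u ≤ xᵢ`; and `u₁ ⊓ u₂ ≤ v₁ ⊔ v₂` splits by Whitman's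
condition.
-/

namespace LatTerm

variable {α : Type}

/-- Whitman's cut-free calculus for `s ≤ t`; cut (`Le.trans`) is admissible. -/
inductive Le : LatTerm α → LatTerm α → Prop
  | var (a : α) : Le (var a) (var a)
  | join_le {s t u : LatTerm α} : Le s u → Le t u → Le (join s t) u
  | le_meet {s t u : LatTerm α} : Le s t → Le s u → Le s (meet t u)
  | meet_le_of_left_le {s t u : LatTerm α} : Le s u → Le (meet s t) u
  | meet_le_of_right_le {s t u : LatTerm α} : Le t u → Le (meet s t) u
  | le_join_of_le_left {s t u : LatTerm α} : Le s t → Le s (join t u)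
  | le_join_of_le_right {s t u : LatTerm α} : Le s u → Le s (join t u)

namespace Le

theorem refl : ∀ t : LatTerm α, Le t t
  | .var a => .var a
  | meet s t => .le_meet (.meet_le_of_left_le (refl s)) (.meet_le_of_right_le (refl t))
  | join s t => .join_le (.le_join_of_le_left (refl s)) (.le_join_of_le_right (refl t))

theorem trans {a b c : LatTerm α} (hab : Le a b) (hbc : Le b c) : Le a c := by
  induction hab generalizing c with
  | var => exact hbc
  | join_le _ _ ih₁ ih₂ => exact .join_le (ih₁ hbc) (ih₂ hbc)
  | meet_le_of_left_le _ ih => exact .meet_le_of_left_le (ih hbc)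
  | meet_le_of_right_le _ ih => exact .meet_le_of_right_le (ih hbc)
  | le_meet _ _ ih₁ ih₂ =>
    generalize hb : meet _ _ = b at hbc
    induction hbc with
    | var | join_le => cases hb
    | le_meet _ _ ihc₁ ihc₂ => exact .le_meet (ihc₁ hb) (ihc₂ hb)
    | le_join_of_le_left _ ihc => exact .le_join_of_le_left (ihc hb)
    | le_join_of_le_right _ ihc => exact .le_join_of_le_right (ihc hb)
    | meet_le_of_left_le h => cases hb; exact ih₁ h
    | meet_le_of_right_le h => cases hb; exact ih₂ h
  | le_join_of_le_left _ ih =>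
    generalize hb : join _ _ = b at hbc
    induction hbc with
    | var | meet_le_of_left_le | meet_le_of_right_le => cases hb
    | join_le h _ => cases hb; exact ih h
    | le_meet _ _ ihc₁ ihc₂ => exact .le_meet (ihc₁ hb) (ihc₂ hb)
    | le_join_of_le_left _ ihc => exact .le_join_of_le_left (ihc hb)
    | le_join_of_le_right _ ihc => exact .le_join_of_le_right (ihc hb)
  | le_join_of_le_right _ ih =>
    generalize hb : join _ _ = b at hbc
    induction hbc with
    | var | meet_le_of_left_le | meet_le_of_right_le => cases hb
    | join_le _ h => cases hb; exact ih h
    | le_meet _ _ ihc₁ ihc₂ => exact .le_meet (ihc₁ hb) (ihc₂ hb)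
    | le_join_of_le_left _ ihc => exact .le_join_of_le_left (ihc hb)
    | le_join_of_le_right _ ihc => exact .le_join_of_le_right (ihc hb)

theorem le_join_left (s t : LatTerm α) : Le s (join s t) := .le_join_of_le_left (refl s)

theorem le_join_right (s t : LatTerm α) : Le t (join s t) := .le_join_of_le_right (refl t)

theorem meet_le_left (s t : LatTerm α) : Le (meet s t) s := .meet_le_of_left_le (refl s)

theorem meet_le_right (s t : LatTerm α) : Le (meet s t) t := .meet_le_of_right_le (refl t)

theorem join_le_iff {s t u : LatTerm α} : Le (join s t) u ↔ Le s u ∧ Le t u :=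
  ⟨fun h => ⟨(le_join_left s t).trans h, (le_join_right s t).trans h⟩,
    fun h => .join_le h.1 h.2⟩

theorem le_meet_iff {s t u : LatTerm α} : Le s (meet t u) ↔ Le s t ∧ Le s u :=
  ⟨fun h => ⟨h.trans (meet_le_left t u), h.trans (meet_le_right t u)⟩,
    fun h => .le_meet h.1 h.2⟩

theorem var_le_var_iff {x y : α} : Le (.var x) (.var y) ↔ x = y :=
  ⟨fun h => by cases h; rfl, fun h => h ▸ .var x⟩

theorem var_le_join {x : α} {s t : LatTerm α} (h : Le (.var x) (join s t)) :
    Le (.var x) s ∨ Le (.var x) t := by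
  cases h with
  | le_join_of_le_left h => exact .inl h
  | le_join_of_le_right h => exact .inr h

theorem meet_le_var {x : α} {s t : LatTerm α} (h : Le (meet s t) (.var x)) :
    Le s (.var x) ∨ Le t (.var x) := by
  cases h with
  | meet_le_of_left_le h => exact .inl h
  | meet_le_of_right_le h => exact .inr h

theorem whitman {s t u w : LatTerm α} (h : Le (meet s t) (join u w)) :
    Le s (join u w) ∨ Le t (join u w) ∨ Le (meet s t) u ∨ Le (meet s t) w := by
  cases h with
  | meet_le_of_left_le h => exact .inl h
  | meet_le_of_right_le h => exact .inr (.inl h)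
  | le_join_of_le_left h => exact .inr (.inr (.inl h))
  | le_join_of_le_right h => exact .inr (.inr (.inr h))

theorem realize_le {M : Type} [Lattice M] (v : α → M) {s t : LatTerm α} (h : Le s t) :
    s.realize v ≤ t.realize v := by
  induction h with
  | var => exact le_rfl
  | join_le _ _ ih₁ ih₂ => exact sup_le ih₁ ih₂
  | le_meet _ _ ih₁ ih₂ => exact le_inf ih₁ ih₂
  | meet_le_of_left_le _ ih => exact inf_le_of_left_le ih
  | meet_le_of_right_le _ ih => exact inf_le_of_right_le ih
  | le_join_of_le_left _ ih => exact le_sup_of_le_left ih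
  | le_join_of_le_right _ ih => exact le_sup_of_le_right ih

end Le

def setoid (α : Type) : Setoid (LatTerm α) where
  r s t := Le s t ∧ Le t s
  iseqv := ⟨fun t => ⟨.refl t, .refl t⟩, fun h => ⟨h.2, h.1⟩,
    fun h₁ h₂ => ⟨h₁.1.trans h₂.1, h₂.2.trans h₁.2⟩⟩

end LatTerm

open LatTerm

abbrev FreeLattice (α : Type) : Type := Quotient (LatTerm.setoid α)

namespace FreeLattice

variable {α : Type}

instance : Lattice (FreeLattice α) where
  le := Quotient.lift₂ Le fun _ _ _ _ h₁ h₂ =>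
    propext ⟨fun h => h₁.2.trans (h.trans h₂.1), fun h => h₁.1.trans (h.trans h₂.2)⟩
  le_refl := by rintro ⟨a⟩; exact Le.refl a
  le_trans := by rintro ⟨a⟩ ⟨b⟩ ⟨c⟩; exact Le.trans
  le_antisymm := by rintro ⟨a⟩ ⟨b⟩ h₁ h₂; exact Quotient.sound ⟨h₁, h₂⟩
  sup := Quotient.map₂ join fun _ _ h₁ _ _ h₂ =>
    ⟨.join_le (.le_join_of_le_left h₁.1) (.le_join_of_le_right h₂.1),
      .join_le (.le_join_of_le_left h₁.2) (.le_join_of_le_right h₂.2)⟩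
  le_sup_left := by rintro ⟨a⟩ ⟨b⟩; exact Le.le_join_left a b
  le_sup_right := by rintro ⟨a⟩ ⟨b⟩; exact Le.le_join_right a b
  sup_le := by rintro ⟨a⟩ ⟨b⟩ ⟨c⟩; exact Le.join_le
  inf := Quotient.map₂ meet fun _ _ h₁ _ _ h₂ =>
    ⟨.le_meet (.meet_le_of_left_le h₁.1) (.meet_le_of_right_le h₂.1),
      .le_meet (.meet_le_of_left_le h₁.2) (.meet_le_of_right_le h₂.2)⟩
  inf_le_left := by rintro ⟨a⟩ ⟨b⟩; exact Le.meet_le_left a b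
  inf_le_right := by rintro ⟨a⟩ ⟨b⟩; exact Le.meet_le_right a b
  le_inf := by rintro ⟨a⟩ ⟨b⟩ ⟨c⟩; exact Le.le_meet

theorem realize_of (u : LatTerm α) :
    u.realize (fun a => (⟦.var a⟧ : FreeLattice α)) = ⟦u⟧ := by
  induction u with
  | var => rfl
  | meet s t ihs iht => exact congrArg₂ (· ⊓ ·) ihs iht
  | join s t ihs iht => exact congrArg₂ (· ⊔ ·) ihs iht

end FreeLattice

theorem latValid_iff {α : Type} {u v : LatTerm α} : LatValid (u, v) ↔ Le u v ∧ Le v u := by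
  refine ⟨fun h => ?_, fun h M _ w => le_antisymm (h.1.realize_le w) (h.2.realize_le w)⟩
  have h := h (FreeLattice α) fun a => ⟦.var a⟧
  simp only [FreeLattice.realize_of] at h
  exact Quotient.exact h

theorem latValid_leEq_iff {α : Type} {s t : LatTerm α} : LatValid (leEq s t) ↔ Le s t := by
  rw [leEq, latValid_iff]
  exact ⟨fun h => h.2.trans (Le.meet_le_right s t),
    fun h => ⟨Le.meet_le_left s t, .le_meet (.refl s) h⟩⟩

theorem latDependent_iff {β : Type} {n : ℕ} {t : Fin n → LatTerm β} :
    LatDependent t ↔ ∃ u v : LatTerm (Fin n), Le (u.subst t) (v.subst t) ∧ ¬ Le u v := by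
  constructor
  · rintro ⟨⟨u, v⟩, hsubst, hnot⟩
    rw [latValid_iff] at hsubst hnot
    by_cases huv : Le u v
    · exact ⟨v, u, hsubst.2, fun hvu => hnot ⟨huv, hvu⟩⟩
    · exact ⟨u, v, hsubst.1, huv⟩
  · rintro ⟨u, v, hsubst, hnot⟩
    exact ⟨leEq u v, latValid_leEq_iff.2 hsubst, mt latValid_leEq_iff.1 hnot⟩

section FinJoinMeet

variable {α β : Type}

theorem le_finJoin : ∀ {m : ℕ} (f : Fin (m + 1) → LatTerm α) (k : Fin (m + 1)),
    Le (f k) (finJoin f)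
  | 0, f, k => by rw [Fin.fin_one_eq_zero k]; exact Le.refl _
  | _ + 1, f, k => by
    induction k using Fin.lastCases with
    | last => exact Le.le_join_right _ _
    | cast j => exact .le_join_of_le_left (le_finJoin (fun j => f j.castSucc) j)

theorem finMeet_le : ∀ {m : ℕ} (f : Fin (m + 1) → LatTerm α) (k : Fin (m + 1)),
    Le (finMeet f) (f k)
  | 0, f, k => by rw [Fin.fin_one_eq_zero k]; exact Le.refl _
  | _ + 1, f, k => by
    induction k using Fin.lastCases with
    | last => exact Le.meet_le_right _ _
    | cast j => exact .meet_le_of_left_le (finMeet_le (fun j => f j.castSucc) j)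

theorem var_le_finJoin_iff {x : α} : ∀ {m : ℕ} {f : Fin (m + 1) → LatTerm α},
    Le (.var x) (finJoin f) ↔ ∃ k, Le (.var x) (f k)
  | 0, _ => ⟨fun h => ⟨0, h⟩, fun ⟨k, hk⟩ => hk.trans (le_finJoin _ k)⟩
  | _ + 1, f => by
    refine ⟨fun h => ?_, fun ⟨k, hk⟩ => hk.trans (le_finJoin f k)⟩
    rcases Le.var_le_join h with h | h
    · obtain ⟨k, hk⟩ := var_le_finJoin_iff.1 h
      exact ⟨k.castSucc, hk⟩
    · exact ⟨Fin.last _, h⟩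

theorem finMeet_le_var_iff {x : α} : ∀ {m : ℕ} {f : Fin (m + 1) → LatTerm α},
    Le (finMeet f) (.var x) ↔ ∃ k, Le (f k) (.var x)
  | 0, _ => ⟨fun h => ⟨0, h⟩, fun ⟨k, hk⟩ => (finMeet_le _ k).trans hk⟩
  | _ + 1, f => by
    refine ⟨fun h => ?_, fun ⟨k, hk⟩ => (finMeet_le f k).trans hk⟩
    rcases Le.meet_le_var h with h | h
    · obtain ⟨k, hk⟩ := finMeet_le_var_iff.1 h
      exact ⟨k.castSucc, hk⟩
    · exact ⟨Fin.last _, h⟩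

theorem subst_finJoin (σ : α → LatTerm β) : ∀ {m : ℕ} (f : Fin (m + 1) → LatTerm α),
    (finJoin f).subst σ = finJoin fun k => (f k).subst σ
  | 0, _ => rfl
  | _ + 1, f => congrArg (join · _) (subst_finJoin σ fun k => f k.castSucc)

theorem subst_finMeet (σ : α → LatTerm β) : ∀ {m : ℕ} (f : Fin (m + 1) → LatTerm α),
    (finMeet f).subst σ = finMeet fun k => (f k).subst σ
  | 0, _ => rfl
  | _ + 1, f => congrArg (meet · _) (subst_finMeet σ fun k => f k.castSucc)

end FinJoinMeet

section Independence

variable {β : Type} {m : ℕ} {t : Fin (m + 2) → LatTerm β} {i : Fin (m + 2)}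

theorem subst_le_finJoin_succAbove {v : LatTerm (Fin (m + 2))} (hv : ¬ Le (.var i) v) :
    Le (v.subst t) (finJoin fun k => t (i.succAbove k)) := by
  induction v with
  | var j =>
    obtain ⟨k, rfl⟩ := Fin.exists_succAbove_eq fun hji : j = i => hv (hji ▸ .var j)
    exact le_finJoin (fun k => t (i.succAbove k)) k
  | meet v₁ v₂ ih₁ ih₂ =>
    by_cases h₁ : Le (.var i) v₁
    · exact .meet_le_of_right_le (ih₂ fun h₂ => hv (.le_meet h₁ h₂))
    · exact .meet_le_of_left_le (ih₁ h₁)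
  | join v₁ v₂ ih₁ ih₂ =>
    exact .join_le (ih₁ fun h => hv (.le_join_of_le_left h))
      (ih₂ fun h => hv (.le_join_of_le_right h))

theorem finMeet_succAbove_le_subst {u : LatTerm (Fin (m + 2))} (hu : ¬ Le u (.var i)) :
    Le (finMeet fun k => t (i.succAbove k)) (u.subst t) := by
  induction u with
  | var j =>
    obtain ⟨k, rfl⟩ := Fin.exists_succAbove_eq fun hji : j = i => hu (hji ▸ .var j)
    exact finMeet_le (fun k => t (i.succAbove k)) k
  | meet u₁ u₂ ih₁ ih₂ =>
    exact .le_meet (ih₁ fun h => hu (.meet_le_of_left_le h))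
      (ih₂ fun h => hu (.meet_le_of_right_le h))
  | join u₁ u₂ ih₁ ih₂ =>
    by_cases h₁ : Le u₁ (.var i)
    · exact .le_join_of_le_right (ih₂ fun h₂ => hu (.join_le h₁ h₂))
    · exact .le_join_of_le_left (ih₁ h₁)

/-- Jónsson: under these conditions the `t i` freely generate the sublattice they generate. -/
theorem le_of_subst_le (hJ : ∀ i, ¬ Le (t i) (finJoin fun k => t (i.succAbove k)))
    (hM : ∀ i, ¬ Le (finMeet fun k => t (i.succAbove k)) (t i)) :
    ∀ {u v : LatTerm (Fin (m + 2))}, Le (u.subst t) (v.subst t) → Le u v := by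
  intro u
  induction u with
  | var i => exact fun h => by_contra fun hv => hJ i (h.trans (subst_le_finJoin_succAbove hv))
  | join u₁ u₂ ih₁ ih₂ =>
    intro v h
    exact .join_le (ih₁ (Le.join_le_iff.1 h).1) (ih₂ (Le.join_le_iff.1 h).2)
  | meet u₁ u₂ ih₁ ih₂ =>
    intro v
    induction v with
    | var j => exact fun h => by_contra fun hu => hM j ((finMeet_succAbove_le_subst hu).trans h)
    | meet v₁ v₂ ihv₁ ihv₂ =>
      exact fun h => .le_meet (ihv₁ (Le.le_meet_iff.1 h).1) (ihv₂ (Le.le_meet_iff.1 h).2)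
    | join v₁ v₂ ihv₁ ihv₂ =>
      intro h
      rcases Le.whitman h with h | h | h | h
      · exact .meet_le_of_left_le (ih₁ h)
      · exact .meet_le_of_right_le (ih₂ h)
      · exact .le_join_of_le_left (ihv₁ h)
      · exact .le_join_of_le_right (ihv₂ h)

end Independence

theorem stmt6 (m : ℕ) {β : Type} (t : Fin (m + 2) → LatTerm β) :
    LatDependent t ↔
      ∃ i : Fin (m + 2),
        LatValid (leEq (t i) (finJoin fun k : Fin (m + 1) => t (i.succAbove k))) ∨
        LatValid (leEq (finMeet fun k : Fin (m + 1) => t (i.succAbove k)) (t i)) := by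
  simp only [latDependent_iff, latValid_leEq_iff]
  constructor
  · rintro ⟨u, v, hsubst, hnot⟩
    by_contra! hindep
    exact hnot (le_of_subst_le (fun i => (hindep i).1) (fun i => (hindep i).2) hsubst)
  · rintro ⟨i, h | h⟩
    · refine ⟨.var i, finJoin fun k => .var (i.succAbove k), by rwa [subst_finJoin], ?_⟩
      simp only [var_le_finJoin_iff, Le.var_le_var_iff, Fin.ne_succAbove, exists_const,
        not_false_eq_true]
    · refine ⟨finMeet fun k => .var (i.succAbove k), .var i, by rwa [subst_finMeet], ?_⟩
      simp only [finMeet_le_var_iff, Le.var_le_var_iff, Fin.succAbove_ne, exists_const,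
        not_false_eq_true]
end

section
/- (Meet-irreducibility of generators.) Let α be a variable type, x ∈ α, and let s_1, s_2 be lattice terms over α. If ⊨_Lat s_1 ⊓ s_2 ≤ x (where x denotes the variable x viewed as a lattice term), then ⊨_Lat s_1 ≤ x or ⊨_Lat s_2 ≤ x. -/
/-!
Whether `s ≤ x` is Lat-valid is decided in the two-element lattice `Prop`, under the valuation
that makes `x` false and every other variable true: if `s` evaluates to false there, then
induction on `s` gives `s ≤ x` in every lattice. In `Prop` the meet is `∧`, so a false
`s₁ ⊓ s₂` has a false factor.
-/

namespace LatTerm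

theorem latValid_leEq_iff {α : Type} (s t : LatTerm α) :
    LatValid (leEq s t) ↔ ∀ (M : Type) [Lattice M] (v : α → M), s.realize v ≤ t.realize v := by
  simp only [LatValid, leEq, realize, inf_eq_left]

theorem realize_le_of_not_realize_ne {α M : Type} [Lattice M] (v : α → M) (x : α) :
    ∀ s : LatTerm α, ¬ s.realize (fun a => a ≠ x) → s.realize v ≤ v x
  | var a, hs => by
    obtain rfl : a = x := not_not.mp hs
    rfl
  | meet s t, hs => by
    rcases not_and_or.mp hs with hs | ht
    · exact inf_le_of_left_le (realize_le_of_not_realize_ne v x s hs)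
    · exact inf_le_of_right_le (realize_le_of_not_realize_ne v x t ht)
  | join s t, hs => by
    rw [realize, sup_le_iff]
    exact ⟨realize_le_of_not_realize_ne v x s (hs ∘ Or.inl),
      realize_le_of_not_realize_ne v x t (hs ∘ Or.inr)⟩

theorem latValid_leEq_var_iff {α : Type} (s : LatTerm α) (x : α) :
    LatValid (leEq s (var x)) ↔ ¬ s.realize (fun a => a ≠ x) := by
  rw [latValid_leEq_iff]
  refine ⟨fun h hs => h Prop (fun a => a ≠ x) hs rfl, fun hs M _ v => ?_⟩
  exact realize_le_of_not_realize_ne v x s hs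

end LatTerm

theorem stmt9 {α : Type} (x : α) (s₁ s₂ : LatTerm α)
    (h : LatValid (leEq (s₁.meet s₂) (.var x))) :
    LatValid (leEq s₁ (.var x)) ∨ LatValid (leEq s₂ (.var x)) := by
  simp only [LatTerm.latValid_leEq_var_iff] at h ⊢
  exact not_and_or.mp h
end

section
/- (Sardinas–Patterson.) Let A be a type and X a finite set of words over A. Then X is not a code if and only if there exists n ≥ 1 such that X ∩ U_n is nonempty. -/
/-!
Suppose `x * ⋯ = d * ⋯` are two factorizations over `X`, except that the leading factor `d`
only lies in `U n`. Compare the first factors: either `x = d`, so `X` meets `U n`, or one is a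
proper prefix of the other and the remainder, which lies in `U (n + 1)`, replaces it, shortening
the factorizations. Starting from two factorizations with different first factors, this must
stop with `X` meeting some `U m`, `m ≥ 1`. Conversely, every `w ∈ U (n + 1)` is the overhang
`x * ⋯ * w = y * ⋯` of two factorizations with different first factors, so `w ∈ X` yields two
different factorizations of one word.
-/

/-- The product `a * l₀ * l₁ * ⋯` of a nonempty list of words given by its head `a`
and tail `l`. -/
def wordProd {A : Type} (a : FreeSemigroup A) (l : List (FreeSemigroup A)) :
    FreeSemigroup A :=
  l.foldl (· * ·) a

/-- `X` is a code: any two factorizations of a word into elements of `X` coincide. -/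
def IsCode {A : Type} (X : Set (FreeSemigroup A)) : Prop :=
  ∀ (a₁ a₂ : FreeSemigroup A) (l₁ l₂ : List (FreeSemigroup A)),
    a₁ ∈ X → a₂ ∈ X → (∀ u ∈ l₁, u ∈ X) → (∀ u ∈ l₂, u ∈ X) →
      wordProd a₁ l₁ = wordProd a₂ l₂ → a₁ :: l₁ = a₂ :: l₂

/-- `Y⁻¹Z := { t | ∃ s ∈ Y, s * t ∈ Z }`. -/
def quotSet {A : Type} (Y Z : Set (FreeSemigroup A)) : Set (FreeSemigroup A) :=
  { t | ∃ s ∈ Y, s * t ∈ Z }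

/-- The Sardinas–Patterson sets: `U 0 = X` and `U (n+1) = X⁻¹(U n) ∪ (U n)⁻¹X`. -/
def spU {A : Type} (X : Set (FreeSemigroup A)) : ℕ → Set (FreeSemigroup A)
  | 0 => X
  | n + 1 => quotSet X (spU X n) ∪ quotSet (spU X n) X

namespace FreeSemigroup

variable {α : Type*}

lemma mul_ne_self (x y : FreeSemigroup α) : x * y ≠ x := by
  intro h
  have := congrArg length h
  rw [length_mul, length, length] at this
  omega

instance : IsLeftCancelMul (FreeSemigroup α) where
  mul_left_cancel x y z h := toFreeMonoid_injective <| mul_left_cancel <| by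
    simpa only [map_mul] using congrArg toFreeMonoid h

lemma mul_eq_mul_cases {u v w z : FreeSemigroup α} (h : u * v = w * z) :
    (u = w ∧ v = z) ∨ (∃ e, w = u * e ∧ v = e * z) ∨ (∃ e, u = w * e ∧ e * v = z) := by
  let word (x : FreeSemigroup α) : List α := (toFreeMonoid x).toList
  have word_injective : Function.Injective word :=
    FreeMonoid.toList.injective.comp toFreeMonoid_injective
  have word_mul (x y : FreeSemigroup α) : word (x * y) = word x ++ word y := by
    simp only [word, map_mul, FreeMonoid.toList_mul]
  have overhang {u v w z : FreeSemigroup α} (c : List α) (hu : word u = word w ++ c)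
      (hz : word z = c ++ word v) : (u = w ∧ v = z) ∨ ∃ e, u = w * e ∧ e * v = z := by
    rcases eq_one_or_toFreeMonoid (FreeMonoid.ofList c) with hc | ⟨e, he⟩
    · obtain rfl : c = [] := congrArg FreeMonoid.toList hc
      exact .inl ⟨word_injective (by simpa using hu), word_injective (by simpa using hz.symm)⟩
    · obtain rfl : word e = c := congrArg FreeMonoid.toList he
      exact .inr ⟨e, word_injective (by rw [word_mul, hu]), word_injective (by rw [word_mul, hz])⟩
  have h' : word u ++ word v = word w ++ word z := by rw [← word_mul, ← word_mul, h]
  rcases List.append_eq_append_iff.mp h' with ⟨c, hw, hv⟩ | ⟨c, hu, hz⟩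
  · rcases overhang c hw hv with ⟨rfl, rfl⟩ | hwu
    · exact .inl ⟨rfl, rfl⟩
    · exact .inr (.inl (hwu.imp fun e he => ⟨he.1, he.2.symm⟩))
  · exact (overhang c hu hz).imp_right .inr

end FreeSemigroup

section SardinasPatterson

open FreeSemigroup

variable {A : Type} {X : Set (FreeSemigroup A)}

lemma mem_spU_succ_of_mem_of_mul_mem_spU {n : ℕ} {s t : FreeSemigroup A}
    (hs : s ∈ X) (h : s * t ∈ spU X n) : t ∈ spU X (n + 1) :=
  .inl ⟨s, hs, h⟩

lemma mem_spU_succ_of_mem_spU_of_mul_mem {n : ℕ} {s t : FreeSemigroup A}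
    (hs : s ∈ spU X n) (h : s * t ∈ X) : t ∈ spU X (n + 1) :=
  .inr ⟨s, hs, h⟩

lemma wordProd_cons (a x : FreeSemigroup A) (l : List (FreeSemigroup A)) :
    wordProd a (x :: l) = a * wordProd x l := by
  induction l generalizing a x with
  | nil => rfl
  | cons b l ih =>
    change wordProd (a * x) (b :: l) = a * wordProd x (b :: l)
    rw [ih, ih, mul_assoc]

lemma wordProd_append_singleton (a w : FreeSemigroup A) (l : List (FreeSemigroup A)) :
    wordProd a (l ++ [w]) = wordProd a l * w := by
  simp only [wordProd, List.foldl_append, List.foldl_cons, List.foldl_nil]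

lemma wordProd_eq_wordProd_cases {x y : FreeSemigroup A} {xs ys : List (FreeSemigroup A)}
    (h : wordProd x xs = wordProd y ys) :
    x = y ∨
      (∃ e a xs', xs = a :: xs' ∧ y = x * e ∧ wordProd a xs' = wordProd e ys) ∨
      (∃ e b ys', ys = b :: ys' ∧ x = y * e ∧ wordProd b ys' = wordProd e xs) := by
  rcases xs with _ | ⟨a, xs'⟩ <;> rcases ys with _ | ⟨b, ys'⟩
  · exact .inl h
  · rw [wordProd_cons] at h
    exact .inr (.inr ⟨_, b, ys', rfl, h, rfl⟩)
  · rw [wordProd_cons] at h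
    exact .inr (.inl ⟨_, a, xs', rfl, h.symm, rfl⟩)
  · rw [wordProd_cons, wordProd_cons] at h
    rcases mul_eq_mul_cases h with ⟨rfl, -⟩ | ⟨e, rfl, he⟩ | ⟨e, rfl, he⟩
    · exact .inl rfl
    · exact .inr (.inl ⟨e, a, xs', rfl, rfl, by rw [he, wordProd_cons]⟩)
    · exact .inr (.inr ⟨e, b, ys', rfl, rfl, by rw [← he, wordProd_cons]⟩)

lemma exists_ne_head_of_wordProd_eq {x y : FreeSemigroup A}
    {xs ys : List (FreeSemigroup A)} (hx : x ∈ X) (hy : y ∈ X) (hxs : ∀ u ∈ xs, u ∈ X)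
    (hys : ∀ u ∈ ys, u ∈ X) (h : wordProd x xs = wordProd y ys) (hne : x :: xs ≠ y :: ys) :
    ∃ x y xs ys, x ∈ X ∧ y ∈ X ∧ (∀ u ∈ xs, u ∈ X) ∧ (∀ u ∈ ys, u ∈ X) ∧
      x ≠ y ∧ wordProd x xs = wordProd y ys := by
  by_cases hxy : x = y
  · subst hxy
    rcases xs with _ | ⟨a, xs'⟩ <;> rcases ys with _ | ⟨b, ys'⟩
    · exact absurd rfl hne
    · exact absurd (wordProd_cons x b ys' ▸ h).symm (mul_ne_self _ _)
    · exact absurd (wordProd_cons x a xs' ▸ h) (mul_ne_self _ _)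
    · rw [wordProd_cons, wordProd_cons] at h
      simp only [List.forall_mem_cons] at hxs hys
      exact exists_ne_head_of_wordProd_eq hxs.1 hys.1 hxs.2 hys.2 (mul_left_cancel h)
        (by simpa using hne)
  · exact ⟨x, y, xs, ys, hx, hy, hxs, hys, hxy, h⟩

lemma not_isCode_iff_exists_ne_head :
    ¬ IsCode X ↔ ∃ x y xs ys, x ∈ X ∧ y ∈ X ∧ (∀ u ∈ xs, u ∈ X) ∧ (∀ u ∈ ys, u ∈ X) ∧
      x ≠ y ∧ wordProd x xs = wordProd y ys := by
  simp only [IsCode, not_forall]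
  constructor
  · rintro ⟨x, y, xs, ys, hx, hy, hxs, hys, h, hne⟩
    exact exists_ne_head_of_wordProd_eq hx hy hxs hys h hne
  · rintro ⟨x, y, xs, ys, hx, hy, hxs, hys, hne, h⟩
    exact ⟨x, y, xs, ys, hx, hy, hxs, hys, h, fun h' => hne (List.cons.inj h').1⟩

theorem exists_mem_inter_spU_of_wordProd_eq {n : ℕ}
    {x d : FreeSemigroup A} {xs ys : List (FreeSemigroup A)} (hx : x ∈ X) (hd : d ∈ spU X n)
    (hxs : ∀ u ∈ xs, u ∈ X) (hys : ∀ u ∈ ys, u ∈ X) (hnd : 1 ≤ n ∨ x ≠ d)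
    (h : wordProd x xs = wordProd d ys) : ∃ m, 1 ≤ m ∧ (X ∩ spU X m).Nonempty := by
  rcases wordProd_eq_wordProd_cases h with rfl | ⟨e, a, xs', rfl, rfl, he⟩ |
      ⟨e, b, ys', rfl, rfl, he⟩
  · exact ⟨n, hnd.resolve_right (not_not.2 rfl), x, hx, hd⟩
  · simp only [List.forall_mem_cons] at hxs
    exact exists_mem_inter_spU_of_wordProd_eq hxs.1 (mem_spU_succ_of_mem_of_mul_mem_spU hx hd)
      hxs.2 hys (.inl n.succ_pos) he
  · simp only [List.forall_mem_cons] at hys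
    exact exists_mem_inter_spU_of_wordProd_eq hys.1 (mem_spU_succ_of_mem_spU_of_mul_mem hd hx)
      hys.2 hxs (.inl n.succ_pos) he
termination_by xs.length + ys.length

theorem exists_wordProd_mul_eq_of_mem_spU_succ {n : ℕ}
    {w : FreeSemigroup A} (hw : w ∈ spU X (n + 1)) :
    ∃ x y xs ys, x ∈ X ∧ y ∈ X ∧ (∀ u ∈ xs, u ∈ X) ∧ (∀ u ∈ ys, u ∈ X) ∧
      x ≠ y ∧ wordProd x xs * w = wordProd y ys := by
  induction n generalizing w with
  | zero =>
    obtain ⟨s, hs, hsw⟩ : ∃ s ∈ X, s * w ∈ X := hw.elim id id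
    exact ⟨s, s * w, [], [], hs, hsw, by simp, by simp, (mul_ne_self s w).symm, rfl⟩
  | succ n ih =>
    rcases hw with ⟨s, hs, hsw⟩ | ⟨s, hs, hsw⟩
    · obtain ⟨x, y, xs, ys, hx, hy, hxs, hys, hne, h⟩ := ih hsw
      refine ⟨x, y, xs ++ [s], ys, hx, hy, ?_, hys, hne, ?_⟩
      · exact List.forall_mem_append.2 ⟨hxs, List.forall_mem_singleton.2 hs⟩
      · rw [wordProd_append_singleton, mul_assoc, h]
    · obtain ⟨x, y, xs, ys, hx, hy, hxs, hys, hne, h⟩ := ih hs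
      refine ⟨y, x, ys, xs ++ [s * w], hy, hx, hys, ?_, hne.symm, ?_⟩
      · exact List.forall_mem_append.2 ⟨hxs, List.forall_mem_singleton.2 hsw⟩
      · rw [wordProd_append_singleton, ← h, mul_assoc]

end SardinasPatterson

theorem stmt15_general {A : Type} (X : Set (FreeSemigroup A)) :
    ¬ IsCode X ↔ ∃ n : ℕ, 1 ≤ n ∧ (X ∩ spU X n).Nonempty := by
  rw [not_isCode_iff_exists_ne_head]
  constructor
  · rintro ⟨x, y, xs, ys, hx, hy, hxs, hys, hne, h⟩
    exact exists_mem_inter_spU_of_wordProd_eq (n := 0) hx hy hxs hys (.inr hne) h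
  · rintro ⟨_ | n, hn, w, hwX, hwU⟩
    · omega
    obtain ⟨x, y, xs, ys, hx, hy, hxs, hys, hne, h⟩ := exists_wordProd_mul_eq_of_mem_spU_succ hwU
    refine ⟨x, y, xs ++ [w], ys, hx, hy, ?_, hys, hne, by rw [wordProd_append_singleton, h]⟩
    exact List.forall_mem_append.2 ⟨hxs, List.forall_mem_singleton.2 hwX⟩

theorem stmt15 {A : Type} (X : Set (FreeSemigroup A)) (hX : X.Finite) :
    ¬ IsCode X ↔ ∃ n : ℕ, 1 ≤ n ∧ (X ∩ spU X n).Nonempty :=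
  stmt15_general X
end

section
/- Let A be a type and X a finite set of words over A. Then for every n ≥ 1, every element of U_n is a proper suffix of some element of X, i.e., U_n ⊆ { t | there exists a word s with s * t ∈ X }; consequently the set { U_n : n ∈ ℕ } of subsets of words is finite. -/
/-! Every element of `U (n+1)` is either a proper suffix of a word of `X` (the part `(U n)⁻¹X`),
or a proper suffix of a word of `U n` (the part `X⁻¹(U n)`); since proper suffixes of proper
suffixes are proper suffixes, induction keeps all `U n`, `n ≥ 1`, inside the finite set of proper
suffixes of words of `X`. The family `U` then takes values in a finite powerset, together with
`U 0 = X`. -/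

section

variable {A : Type}

def properSuffixes (Z : Set (FreeSemigroup A)) : Set (FreeSemigroup A) :=
  { t | ∃ s : FreeSemigroup A, s * t ∈ Z }

lemma properSuffixes_mono : Monotone (properSuffixes (A := A)) :=
  fun _ _ hYZ _ ⟨s, hs⟩ => ⟨s, hYZ hs⟩

lemma properSuffixes_properSuffixes_subset (Z : Set (FreeSemigroup A)) :
    properSuffixes (properSuffixes Z) ⊆ properSuffixes Z := by
  rintro t ⟨s, u, hu⟩
  exact ⟨u * s, by rwa [mul_assoc]⟩

lemma quotSet_subset_properSuffixes (Y Z : Set (FreeSemigroup A)) :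
    quotSet Y Z ⊆ properSuffixes Z :=
  fun _ ⟨s, _, hs⟩ => ⟨s, hs⟩

/-- A proper suffix `t` of `x` is determined by the list `t.head :: t.tail`, a suffix of
`x.tail`. -/
lemma finite_properSuffixes_singleton (x : FreeSemigroup A) :
    (properSuffixes {x}).Finite := by
  have hinj : Function.Injective fun t : FreeSemigroup A => t.head :: t.tail :=
    fun t u h => FreeSemigroup.ext (List.head_eq_of_cons_eq h) (List.tail_eq_of_cons_eq h)
  refine ((List.finite_toSet x.tail.tails).preimage hinj.injOn).subset ?_
  rintro t ⟨s, rfl : s * t = x⟩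
  exact (List.mem_tails _ _).mpr (List.suffix_append _ _)

lemma Set.Finite.properSuffixes {X : Set (FreeSemigroup A)} (hX : X.Finite) :
    (properSuffixes X).Finite := by
  refine (hX.biUnion fun x _ => finite_properSuffixes_singleton x).subset ?_
  rintro t ⟨s, hs⟩
  exact Set.mem_biUnion hs ⟨s, rfl⟩

lemma spU_subset_properSuffixes (X : Set (FreeSemigroup A)) {n : ℕ} (hn : 1 ≤ n) :
    spU X n ⊆ properSuffixes X := by
  induction n, hn using Nat.le_induction with
  | base =>
    exact Set.union_subset (quotSet_subset_properSuffixes X X) (quotSet_subset_properSuffixes X X)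
  | succ n _ ih =>
    refine Set.union_subset ?_ (quotSet_subset_properSuffixes _ X)
    calc quotSet X (spU X n) ⊆ properSuffixes (spU X n) := quotSet_subset_properSuffixes _ _
      _ ⊆ properSuffixes (properSuffixes X) := properSuffixes_mono ih
      _ ⊆ properSuffixes X := properSuffixes_properSuffixes_subset X

lemma range_spU_subset (X : Set (FreeSemigroup A)) :
    Set.range (spU X) ⊆ insert X (Set.powerset (properSuffixes X)) := by
  rintro _ ⟨_ | n, rfl⟩
  · exact Set.mem_insert _ _
  · exact Or.inr (spU_subset_properSuffixes X n.succ_pos)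

end

theorem stmt16 {A : Type} (X : Set (FreeSemigroup A)) (hX : X.Finite) :
    (∀ n : ℕ, 1 ≤ n → spU X n ⊆ { t | ∃ s : FreeSemigroup A, s * t ∈ X }) ∧
      (Set.range (spU X)).Finite :=
  ⟨fun _ hn => spU_subset_properSuffixes X hn,
    (hX.properSuffixes.finite_subsets.insert X).subset (range_spU_subset X)⟩
end

section
/- Every finitely generated subgroup of a free group is isomorphic to a free group on a finite set: if X is a type and H is a finitely generated subgroup of FreeGroup X, then there exist a finite type S and a group isomorphism H ≃* FreeGroup S. (Hence finitely generated subgroups of finitely generated free groups are finitely presented, i.e., finitely generated free groups are coherent.) -/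
/-!
By the Nielsen–Schreier theorem `H` is free on some basis `S`. Since `H` is finitely generated,
so is its abelianization `ℤ^(S)`, a free `ℤ`-module with basis `S`; hence `S` is finite.
-/

theorem FreeGroup.finite_of_fg {α : Type*} [Group.FG (FreeGroup α)] : Finite α := by
  have : Group.FG (Abelianization (FreeGroup α)) :=
    Group.fg_of_surjective (f := Abelianization.of) QuotientGroup.mk_surjective
  have : AddGroup.FG (FreeAbelianGroup α) := AddGroup.fg_of_group_fg
  have : Module.Finite ℤ (FreeAbelianGroup α) := Module.Finite.iff_addGroup_fg.mpr this
  exact Module.Finite.finite_basis (FreeAbelianGroup.basis α)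

theorem IsFreeGroup.finite_generators (G : Type*) [Group G] [IsFreeGroup G] [Group.FG G] :
    Finite (IsFreeGroup.Generators G) :=
  have : Group.FG (FreeGroup (IsFreeGroup.Generators G)) :=
    Group.fg_of_surjective (f := (IsFreeGroup.toFreeGroup G).toMonoidHom)
      (IsFreeGroup.toFreeGroup G).surjective
  FreeGroup.finite_of_fg

theorem stmt18 (X : Type) (H : Subgroup (FreeGroup X)) (hH : H.FG) :
    ∃ (S : Type) (_ : Finite S), Nonempty (H ≃* FreeGroup S) := by
  have : Group.FG H := (Group.fg_iff_subgroup_fg H).mpr hH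
  exact ⟨_, IsFreeGroup.finite_generators H, ⟨IsFreeGroup.toFreeGroup H⟩⟩
end
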